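/- arXiv:1703.08306 — 7 statements merged into one kernel-verified Lean document; each statement's English description precedes it below -/
import Mathlib

section
/- Let n, k ≥ 1 and let f₁, …, f_{k+1} : (Fin k → (Fin n → ZMod 2)) → (Fin n → ZMod 2) be arbitrary round functions. Let x_p = (L_p⁰, R₁⁰, …, R_k⁰) and x_q = (L_q⁰, R₁⁰, …, R_k⁰) be two initial states of the kn:n-UFN that agree in all source blocks R₁⁰, …, R_k⁰ and differ only in the first block. Then the first blocks of the states after k+1 rounds satisfy L_p^{k+1} ⊕ L_q^{k+1} = L_p⁰ ⊕ L_q⁰. -/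
/-- An `n`-bit block, i.e. a bit string of length `n`. -/
abbrev Blk (n : ℕ) : Type := Fin n → ZMod 2

/-- The state of a `(k+1)`-block Feistel network: `k+1` blocks of `n` bits each. -/
abbrev St (n k : ℕ) : Type := Fin (k + 1) → Blk n

/-- A round function of a source-heavy `kn:n`-UFN: input `kn` bits, output `n` bits. -/
abbrev SrcRF (n k : ℕ) : Type := (Fin k → Blk n) → Blk n

/-- One round of the `kn:n`-UFN: `(L, R₁, …, R_k) ↦ (R₁, …, R_k, L ⊕ f (R₁, …, R_k))`.
The state coordinate `0` is `L` and coordinate `j` (for `1 ≤ j ≤ k`) is `R_j`. -/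
def ufnRound {n k : ℕ} (f : SrcRF n k) (s : St n k) : St n k :=
  fun i =>
    if h : (i : ℕ) < k then s ⟨(i : ℕ) + 1, by omega⟩
    else s 0 + f (fun j => s j.succ)

/-- The `r`-round `kn:n`-UFN with round functions `f 0, …, f (r-1)`, applied with `f 0` first. -/
def ufnRun {n k : ℕ} : (r : ℕ) → (Fin r → SrcRF n k) → St n k → St n k
  | 0, _, s => s
  | r + 1, f, s => ufnRound (f (Fin.last r)) (ufnRun r (fun i => f i.castSucc) s)

/-!
The block `L⁰ ⊕ f₁(R₁⁰, …, R_k⁰)` written into the last slot by the first round moves down one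
slot per round, so after `k + 1` rounds it is the first block. Since `f₁` only sees the source
blocks, on which the two states agree, its value cancels in `L_p^{k+1} ⊕ L_q^{k+1}`.
-/

theorem ufnRound_apply_of_lt {n k : ℕ} (f : SrcRF n k) (s : St n k) (i : Fin (k + 1))
    (hi : (i : ℕ) < k) : ufnRound f s i = s ⟨i + 1, by omega⟩ :=
  dif_pos hi

theorem ufnRound_apply_last {n k : ℕ} (f : SrcRF n k) (s : St n k) :
    ufnRound f s (Fin.last k) = s 0 + f (fun j => s j.succ) :=
  dif_neg (by simp)

theorem ufnRun_succ_apply_of_add_eq {n k m : ℕ} (f : Fin (m + 1) → SrcRF n k) (s : St n k)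
    (i : Fin (k + 1)) (hi : (i : ℕ) + m = k) :
    ufnRun (m + 1) f s i = s 0 + f 0 (fun j => s j.succ) := by
  induction m generalizing i with
  | zero =>
    rw [show i = Fin.last k from Fin.ext hi]
    exact ufnRound_apply_last _ _
  | succ m ih =>
    rw [ufnRun, ufnRound_apply_of_lt _ _ i (by omega), ih _ _ (by dsimp only; omega)]
    rfl

theorem ufnRun_succ_self_apply_zero {n k : ℕ} (f : Fin (k + 1) → SrcRF n k) (s : St n k) :
    ufnRun (k + 1) f s 0 = s 0 + f 0 (fun j => s j.succ) :=
  ufnRun_succ_apply_of_add_eq f s 0 (zero_add k)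

theorem ufn_k_add_one_rounds_linear_relation_general (n k : ℕ)
    (f : Fin (k + 1) → SrcRF n k) (xp xq : St n k)
    (hR : ∀ j : Fin (k + 1), j ≠ 0 → xp j = xq j) :
    ufnRun (k + 1) f xp 0 + ufnRun (k + 1) f xq 0 = xp 0 + xq 0 := by
  have hsrc : (fun j : Fin k => xp j.succ) = fun j => xq j.succ :=
    funext fun j => hR j.succ j.succ_ne_zero
  rw [ufnRun_succ_self_apply_zero, ufnRun_succ_self_apply_zero, hsrc, add_comm (xq 0),
    ZModModule.add_add_add_cancel]

/-- If two initial states of the `kn:n`-UFN agree in all source blocks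
`R₁⁰, …, R_k⁰` and differ only in the first block `L⁰`, then after `k+1` rounds the first
blocks satisfy `L_p^{k+1} ⊕ L_q^{k+1} = L_p⁰ ⊕ L_q⁰` (for arbitrary round functions). -/
theorem ufn_k_add_one_rounds_linear_relation (n k : ℕ) (hn : 1 ≤ n) (hk : 1 ≤ k)
    (f : Fin (k + 1) → SrcRF n k) (xp xq : St n k)
    (hR : ∀ j : Fin (k + 1), j ≠ 0 → xp j = xq j) (hL : xp 0 ≠ xq 0) :
    ufnRun (k + 1) f xp 0 + ufnRun (k + 1) f xq 0 = xp 0 + xq 0 :=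
  ufn_k_add_one_rounds_linear_relation_general n k f xp xq hR
end

section
/- Let n, k ≥ 1, let S = (Fin (k+1)) → (Fin n → ZMod 2) be the state space of (k+1)n-bit strings, and let x_p ≠ x_q be two fixed states whose last k blocks agree (they differ only in the first block). For a uniformly random permutation π of S, the probability that the first block of π(x_p) XORed with the first block of π(x_q) equals the XOR of the first blocks of x_p and x_q is exactly 2^{kn} / (2^{(k+1)n} − 1). Equivalently, the number of permutations π of S satisfying this relation, multiplied by (2^{(k+1)n} − 1), equals 2^{kn} times the total number of permutations of S. -/
open Finset Equiv

section

variable {α : Type*}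

theorem Equiv.Perm.exists_apply_eq_and_apply_eq {a b a' b' : α} (hab : a ≠ b)
    (hab' : a' ≠ b') : ∃ σ : Perm α, σ a = a' ∧ σ b = b' := by
  have hinj : ∀ {u v : α}, u ≠ v → Function.Injective ![u, v] := fun h =>
    Fin.forall_fin_two.2 ⟨Fin.forall_fin_two.2 ⟨fun _ => rfl, fun e => (h e).elim⟩,
      Fin.forall_fin_two.2 ⟨fun e => (h e.symm).elim, fun _ => rfl⟩⟩
  obtain ⟨σ, hσ⟩ := Perm.exists_extending_pair _ _ (hinj hab) (hinj hab')
  exact ⟨σ, hσ 0, hσ 1⟩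

variable [Fintype α] [DecidableEq α]

theorem card_perm_apply_eq_and_apply_eq_congr (x y : α) {a b a' b' : α}
    (hab : a ≠ b) (hab' : a' ≠ b') :
    #{π : Perm α | π x = a ∧ π y = b} = #{π : Perm α | π x = a' ∧ π y = b'} := by
  obtain ⟨σ, ha, hb⟩ := Perm.exists_apply_eq_and_apply_eq hab hab'
  refine card_nbij' (σ * ·) (σ⁻¹ * ·) ?_ ?_ (fun π _ => by simp) (fun π _ => by simp)
  · rintro π hπ
    simp only [coe_filter, Set.mem_ofPred_eq, mem_univ, true_and, Perm.mul_apply] at hπ ⊢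
    rw [hπ.1, hπ.2, ha, hb]
    simp
  · rintro π hπ
    simp only [coe_filter, Set.mem_ofPred_eq, mem_univ, true_and, Perm.mul_apply] at hπ ⊢
    rw [hπ.1, hπ.2, ← ha, ← hb]
    simp

theorem card_perm_pair_mem {x y : α} (hxy : x ≠ y) {G : Finset (α × α)}
    (hG : ∀ p ∈ G, p.1 ≠ p.2) :
    #{π : Perm α | (π x, π y) ∈ G} = #G * #{π : Perm α | π x = x ∧ π y = y} := by
  rw [← sum_card_fiberwise_eq_card_filter, ← sum_const_nat]
  intro p hp
  simp_rw [Prod.ext_iff]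
  exact card_perm_apply_eq_and_apply_eq_congr x y (hG p hp) hxy

theorem card_perm_pair_mem_mul {x y : α} (hxy : x ≠ y) {G : Finset (α × α)}
    (hG : ∀ p ∈ G, p.1 ≠ p.2) :
    #{π : Perm α | (π x, π y) ∈ G} * (Fintype.card α * (Fintype.card α - 1)) =
      #G * Fintype.card (Perm α) := by
  have htotal := card_perm_pair_mem hxy (G := univ.offDiag) fun p hp => (mem_offDiag.1 hp).2.2
  simp only [mem_offDiag, mem_univ, ne_eq, EmbeddingLike.apply_eq_iff_eq, hxy, not_false_eq_true,
    and_self, filter_true, card_univ, offDiag_card] at htotal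
  rw [card_perm_pair_mem hxy hG, htotal, Nat.mul_sub_one]
  ring

end

theorem card_filter_add_apply_zero_eq {β : Type*} [AddGroup β] [Fintype β] [DecidableEq β]
    (k : ℕ) (c : β) :
    #{p : (Fin (k + 1) → β) × (Fin (k + 1) → β) | p.1 0 + p.2 0 = c} =
      Fintype.card β ^ (k + 1) * Fintype.card β ^ k := by
  calc _ = #(univ : Finset ((Fin (k + 1) → β) × (Fin k → β))) := by
        refine card_nbij' (fun p => (p.1, Fin.tail p.2))
          (fun q => (q.1, Fin.cons (-q.1 0 + c) q.2)) (fun _ _ => mem_coe.2 (mem_univ _))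
          (fun _ _ => by simp) ?_ (fun _ _ => by simp)
        rintro ⟨u, v⟩ h
        simp only [coe_filter, mem_univ, true_and, Set.mem_ofPred_eq] at h
        simp [← h]
    _ = _ := by simp

theorem cast_div_eq_div_sub_one {a b t N : ℕ} (hN : 1 < N) (ht : t ≠ 0)
    (h : a * (N - 1) = b * t) : (a / t : ℝ) = b / (N - 1) := by
  have hcast : ((N - 1 : ℕ) : ℝ) = N - 1 := by
    rw [Nat.cast_sub hN.le, Nat.cast_one]
  rw [div_eq_div_iff (Nat.cast_ne_zero.2 ht) (hcast ▸ Nat.cast_ne_zero.2 (by omega)), ← hcast]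
  exact_mod_cast h

theorem Blk.add_eq_zero_iff {n : ℕ} {u v : Blk n} : u + v = 0 ↔ u = v := by
  have hv : v + v = 0 := funext fun i => CharTwo.add_self_eq_zero (v i)
  rw [add_eq_zero_iff_eq_neg, neg_eq_of_add_eq_zero_left hv]

theorem random_perm_first_block_xor_relation_general (n k : ℕ)
    (xp xq : St n k) (hne : xp ≠ xq)
    (hR : ∀ j : Fin (k + 1), j ≠ 0 → xp j = xq j) :
    (((Finset.univ.filter (fun π : Equiv.Perm (St n k) =>
          π xp 0 + π xq 0 = xp 0 + xq 0)).card : ℝ) /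
        (Fintype.card (Equiv.Perm (St n k)) : ℝ) =
      (2 : ℝ) ^ (k * n) / ((2 : ℝ) ^ ((k + 1) * n) - 1)) ∧
    (Finset.univ.filter (fun π : Equiv.Perm (St n k) =>
        π xp 0 + π xq 0 = xp 0 + xq 0)).card * (2 ^ ((k + 1) * n) - 1) =
      2 ^ (k * n) * Fintype.card (Equiv.Perm (St n k)) := by
  set c := xp 0 + xq 0
  have hc : c ≠ 0 := fun h => hne <| funext fun j =>
    if hj : j = 0 then hj ▸ Blk.add_eq_zero_iff.1 h else hR j hj
  set G : Finset (St n k × St n k) := {p | p.1 0 + p.2 0 = c}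
  have hG : ∀ p ∈ G, p.1 ≠ p.2 := fun p hp h =>
    hc ((mem_filter.1 hp).2 ▸ Blk.add_eq_zero_iff.2 (congrFun h 0))
  have hcount : #{π : Perm (St n k) | π xp 0 + π xq 0 = c} =
      #{π : Perm (St n k) | (π xp, π xq) ∈ G} := by
    simp [G]
  have hN : Fintype.card (St n k) = 2 ^ ((k + 1) * n) := by simp [pow_mul']
  have key : #{π : Perm (St n k) | π xp 0 + π xq 0 = c} * (2 ^ ((k + 1) * n) - 1) =
      2 ^ (k * n) * Fintype.card (Perm (St n k)) := by
    have hmul := card_perm_pair_mem_mul hne hG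
    rw [card_filter_add_apply_zero_eq, ← hcount, hN, Fintype.card_fun, Fintype.card_fin, ZMod.card,
      ← pow_mul, ← pow_mul, mul_comm n, mul_comm n] at hmul
    refine Nat.eq_of_mul_eq_mul_left (Nat.two_pow_pos ((k + 1) * n)) ?_
    rw [mul_left_comm, hmul]
    ring
  have hN1 : 1 < 2 ^ ((k + 1) * n) := hN ▸ Fintype.one_lt_card_iff.2 ⟨xp, xq, hne⟩
  exact ⟨by exact_mod_cast cast_div_eq_div_sub_one hN1 Fintype.card_ne_zero key, key⟩

/-- Let `x_p ≠ x_q` be two states whose last `k` blocks agree (they differ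
only in the first block).  For a uniformly random permutation `π` of the state space `St n k`,
the probability that `(π x_p) 0 ⊕ (π x_q) 0 = x_p 0 ⊕ x_q 0` is exactly
`2^{kn} / (2^{(k+1)n} − 1)`; equivalently, the number of such permutations multiplied by
`2^{(k+1)n} − 1` equals `2^{kn}` times the total number of permutations. -/
theorem random_perm_first_block_xor_relation (n k : ℕ) (hn : 1 ≤ n) (hk : 1 ≤ k)
    (xp xq : St n k) (hne : xp ≠ xq)
    (hR : ∀ j : Fin (k + 1), j ≠ 0 → xp j = xq j) :
    (((Finset.univ.filter (fun π : Equiv.Perm (St n k) =>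
          π xp 0 + π xq 0 = xp 0 + xq 0)).card : ℝ) /
        (Fintype.card (Equiv.Perm (St n k)) : ℝ) =
      (2 : ℝ) ^ (k * n) / ((2 : ℝ) ^ ((k + 1) * n) - 1)) ∧
    (Finset.univ.filter (fun π : Equiv.Perm (St n k) =>
        π xp 0 + π xq 0 = xp 0 + xq 0)).card * (2 ^ ((k + 1) * n) - 1) =
      2 ^ (k * n) * Fintype.card (Equiv.Perm (St n k)) :=
  random_perm_first_block_xor_relation_general n k xp xq hne hR
end

section
/- Let n, k, m ≥ 1 and let x₁, …, x_m be m distinct initial states of the kn:n-UFN. Draw a tuple (f₁, …, f_{k+2}) of round functions uniformly at random from all tuples of functions (Fin k → (Fin n → ZMod 2)) → (Fin n → ZMod 2). Let the BAD event ξ be: there exist a round index i with 1 ≤ i ≤ k+1 and query indices p < q such that the source parts agree, i.e. (R_{p,1}^i, …, R_{p,k}^i) = (R_{q,1}^i, …, R_{q,k}^i), where (L_p^i, R_{p,1}^i, …, R_{p,k}^i) is the state of query x_p after i rounds. Then Pr[ξ] ≤ (k+1)·m² / 2^{n+1}. -/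
open Finset Function

/-- Given the coordinates other than `i₀`, membership in `S` pins down the value `F i₀ (u F)`,
so a uniformly random `F` lies in `S` with probability at most `1 / |G|`. -/
theorem card_mul_card_le_of_apply_eq_add {ι α G : Type*} [DecidableEq ι] [Fintype ι]
    [DecidableEq α] [Fintype α] [Fintype G] [AddGroup G] (i₀ : ι)
    {u v : (ι → α → G) → α} {c : (ι → α → G) → G}
    (hu : DependsOn u {i₀}ᶜ) (hv : DependsOn v {i₀}ᶜ) (hc : DependsOn c {i₀}ᶜ)
    (S : Finset (ι → α → G)) (hS : ∀ F ∈ S, u F ≠ v F ∧ F i₀ (u F) = F i₀ (v F) + c F) :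
    #S * Fintype.card G ≤ Fintype.card (ι → α → G) := by
  set shift : (ι → α → G) × G → ι → α → G :=
    fun Fb => Fb.1 + Pi.single i₀ (Pi.single (u Fb.1) Fb.2)
  set recover : (ι → α → G) → G := fun F' => -(F' i₀ (v F') + c F') + F' i₀ (u F')
  have hshift : ∀ F b, ∀ j ∈ ({i₀}ᶜ : Set ι), shift (F, b) j = F j := by
    intro F b j hj
    simp [shift, Set.mem_compl_singleton_iff.1 hj]
  have hrecover : ∀ F ∈ S, ∀ b, recover (shift (F, b)) = b := by
    intro F hF b
    obtain ⟨huv, hval⟩ := hS F hF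
    simp only [recover, hu (hshift F b), hv (hshift F b), hc (hshift F b)]
    simp [shift, huv.symm, hval, add_assoc]
  calc #S * Fintype.card G = #(S ×ˢ (univ : Finset G)) := by rw [card_product, card_univ]
    _ ≤ #(univ : Finset (ι → α → G)) := by
      refine card_le_card_of_injOn shift (fun _ _ => mem_coe.2 (mem_univ _)) ?_
      rintro ⟨F₁, b₁⟩ h₁ ⟨F₂, b₂⟩ h₂ heq
      simp only [coe_product, Set.mem_prod, mem_coe, mem_univ, and_true] at h₁ h₂
      have hb' : b₁ = b₂ := by rw [← hrecover F₁ h₁ b₁, ← hrecover F₂ h₂ b₂, heq]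
      have hu' : u F₁ = u F₂ := by
        rw [← hu (hshift F₁ b₁), ← hu (hshift F₂ b₂), heq]
      simp only [shift, hu', hb', add_left_inj] at heq
      rw [heq, hb']
    _ = Fintype.card (ι → α → G) := card_univ

theorem two_mul_card_filter_lt_le {α : Type*} [Fintype α] [Preorder α] [DecidableLT α] :
    2 * #{z : α × α | z.1 < z.2} ≤ Fintype.card α ^ 2 := by
  set A : Finset (α × α) := {z | z.1 < z.2}
  set B : Finset (α × α) := {z | z.2 < z.1}
  have hswap : #A = #B := card_equiv (Equiv.prodComm α α) (by simp [A, B])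
  have hdisj : Disjoint A B := disjoint_filter.2 fun _ _ h => lt_asymm h
  calc 2 * #A = #(A.disjUnion B hdisj) := by rw [card_disjUnion, ← hswap, two_mul]
    _ ≤ Fintype.card (α × α) := card_le_univ _
    _ = Fintype.card α ^ 2 := by rw [Fintype.card_prod, sq]

theorem card_biUnion_mul_le {ι β : Type*} [DecidableEq β] (s : Finset ι) (f : ι → Finset β)
    {c N : ℕ} (h : ∀ a ∈ s, #(f a) * c ≤ N) : #(s.biUnion f) * c ≤ #s * N :=
  calc #(s.biUnion f) * c ≤ (∑ a ∈ s, #(f a)) * c := by gcongr; exact card_biUnion_le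
    _ = ∑ a ∈ s, #(f a) * c := sum_mul ..
    _ ≤ #s * N := by simpa using sum_le_card_nsmul s _ N h

section Ufn

variable {n k : ℕ}

theorem card_blk : Fintype.card (Blk n) = 2 ^ n := by
  rw [Fintype.card_fun, ZMod.card, Fintype.card_fin]

theorem ufnRound_eq_snoc (f : SrcRF n k) (s : St n k) :
    ufnRound f s = Fin.snoc (Fin.tail s) (s 0 + f (Fin.tail s)) := by
  funext i
  induction i using Fin.lastCases with
  | last => simp [ufnRound]; rfl
  | cast j => simp [ufnRound, Fin.tail, Fin.succ]

theorem ufnRound_injective (f : SrcRF n k) : Injective (ufnRound f) := by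
  intro s s' h
  rw [ufnRound_eq_snoc, ufnRound_eq_snoc, Fin.snoc_inj] at h
  obtain ⟨htail, hlast⟩ := h
  rw [htail, add_left_inj] at hlast
  rw [← Fin.cons_self_tail s, ← Fin.cons_self_tail s', hlast, htail]

theorem ufnRun_injective (r : ℕ) (f : Fin r → SrcRF n k) : Injective (ufnRun r f) := by
  induction r with
  | zero => exact injective_id
  | succ r ih => exact (ufnRound_injective _).comp (ih _)

theorem tail_ne_and_apply_eq_of_ufnRound_last_eq {f : SrcRF n k} {s s' : St n k} (hss' : s ≠ s')
    (h : ufnRound f s (Fin.last k) = ufnRound f s' (Fin.last k)) :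
    Fin.tail s ≠ Fin.tail s' ∧ f (Fin.tail s) = f (Fin.tail s') + (s' 0 - s 0) := by
  rw [ufnRound_eq_snoc, ufnRound_eq_snoc, Fin.snoc_last, Fin.snoc_last] at h
  refine ⟨fun htail => hss' ?_, ?_⟩
  · rw [htail, add_left_inj] at h
    rw [← Fin.cons_self_tail s, ← Fin.cons_self_tail s', h, htail]
  · rw [← add_left_cancel_iff (a := s 0), h]
    abel

def sourceCollisions {r : ℕ} (s s' : St n k) (i : ℕ) (hi : i ≤ r) :
    Finset (Fin r → SrcRF n k) :=
  {F | ∀ j : Fin (k + 1), j ≠ 0 →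
    ufnRun i (fun t => F (Fin.castLE hi t)) s j = ufnRun i (fun t => F (Fin.castLE hi t)) s' j}

theorem ufnRun_castLE_dependsOn {r i : ℕ} (hi : i ≤ r) (s : St n k) :
    DependsOn (fun F : Fin r → SrcRF n k => ufnRun i (fun t => F (Fin.castLE hi t)) s)
      {j | (j : ℕ) < i} :=
  fun _ _ h => congrArg (ufnRun i · s) (funext fun t => h _ t.isLt)

theorem card_sourceCollisions_mul_le (hk : 1 ≤ k) {r i : ℕ} (hi : i ≤ r) (hi0 : 0 < i)
    {s s' : St n k} (hss' : s ≠ s') :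
    #(sourceCollisions s s' i hi) * 2 ^ n ≤ Fintype.card (Fin r → SrcRF n k) := by
  obtain ⟨i, rfl⟩ := Nat.exists_eq_add_one_of_ne_zero hi0.ne'
  set pre : (Fin r → SrcRF n k) → St n k → St n k :=
    fun F => ufnRun i (fun t => F (Fin.castLE (by omega) t))
  have hpre (s : St n k) : DependsOn (pre · s) {⟨i, hi⟩}ᶜ :=
    (ufnRun_castLE_dependsOn _ s).mono fun j hj => by
      simp only [Set.mem_compl_iff, Set.mem_singleton_iff, Fin.ext_iff]
      exact hj.ne
  rw [← card_blk]
  refine card_mul_card_le_of_apply_eq_add ⟨i, hi⟩ (u := fun F => Fin.tail (pre F s))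
    (v := fun F => Fin.tail (pre F s')) (c := fun F => pre F s' 0 - pre F s 0)
    (fun F G h => by simp only [hpre s h]) (fun F G h => by simp only [hpre s' h])
    (fun F G h => by simp only [hpre s h, hpre s' h]) _ fun F hF => ?_
  refine tail_ne_and_apply_eq_of_ufnRound_last_eq ((ufnRun_injective _ _).ne hss') ?_
  exact (mem_filter.1 hF).2 (Fin.last k) (by simp [Fin.ext_iff]; omega)

end Ufn

open scoped Classical in
/-- **Lemma 3.2.** For `m` distinct initial states and a uniformly random tuple
of `k+2` round functions, the probability of the BAD event — some round `1 ≤ i ≤ k+1` and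
queries `p < q` whose source parts `(R_{·,1}^i, …, R_{·,k}^i)` agree — is at most
`(k+1)·m² / 2^{n+1}`. -/
theorem ufn_bad_event_probability (n k m : ℕ) (hk : 1 ≤ k)
    (x : Fin m → St n k) (hx : Function.Injective x) :
    ((Finset.univ.filter (fun F : Fin (k + 2) → SrcRF n k =>
        ∃ i, ∃ _ : 1 ≤ i, ∃ h2 : i ≤ k + 1, ∃ p q : Fin m, p < q ∧
          ∀ j : Fin (k + 1), j ≠ 0 →
            ufnRun i (fun t => F (Fin.castLE (by omega) t)) (x p) j =
            ufnRun i (fun t => F (Fin.castLE (by omega) t)) (x q) j)).card : ℝ) /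
      (Fintype.card (Fin (k + 2) → SrcRF n k) : ℝ) ≤
      ((k : ℝ) + 1) * (m : ℝ) ^ 2 / (2 : ℝ) ^ (n + 1) := by
  set N := Fintype.card (Fin (k + 2) → SrcRF n k)
  set I : Finset (Fin (k + 2) × Fin m × Fin m) :=
    (univ.erase 0 : Finset (Fin (k + 2))) ×ˢ ({z | z.1 < z.2} : Finset (Fin m × Fin m))
  set E : Fin (k + 2) × Fin m × Fin m → Finset (Fin (k + 2) → SrcRF n k) :=
    fun z => sourceCollisions (x z.2.1) (x z.2.2) z.1 z.1.isLt.le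
  have hE : ∀ z ∈ I, #(E z) * 2 ^ n ≤ N := fun z hz => by
    simp only [I, mem_product, mem_erase, mem_filter, mem_univ, and_true, true_and] at hz
    exact card_sourceCollisions_mul_le hk _ (Fin.pos_iff_ne_zero.2 hz.1) (hx.ne hz.2.ne)
  have hI : 2 * #I ≤ (k + 1) * m ^ 2 := by
    rw [card_product, card_erase_of_mem (mem_univ _), card_univ, Fintype.card_fin, mul_left_comm]
    simpa using Nat.mul_le_mul_left (k + 1) (two_mul_card_filter_lt_le (α := Fin m))
  rw [div_le_div_iff₀ (Nat.cast_pos.2 Fintype.card_pos) (by positivity)]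
  norm_cast
  calc _ ≤ 2 * (#(I.biUnion E) * 2 ^ n) := by
        rw [pow_succ, ← mul_assoc, mul_comm _ 2]
        gcongr
        intro F hF
        obtain ⟨i, hi1, hi2, p, q, hpq, hcoll⟩ := (mem_filter.1 hF).2
        refine mem_biUnion.2 ⟨(⟨i, by omega⟩, p, q), ?_, mem_filter.2 ⟨mem_univ _, hcoll⟩⟩
        simp [I, Fin.ext_iff, hpq]
        omega
    _ ≤ 2 * (#I * N) := by grw [card_biUnion_mul_le I E hE]
    _ ≤ (k + 1) * m ^ 2 * N := by rw [← mul_assoc]; gcongr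
end

section
/- Let n, k ≥ 1 and let x_p ≠ x_q be two distinct initial states of the n:kn-UFN. Draw a tuple (f₁, …, f_k) of round functions uniformly at random from all tuples of functions (Fin n → ZMod 2) → (Fin k → (Fin n → ZMod 2)). Then the probability that the last blocks collide after k rounds, i.e. R_p^k = R_q^k, is at most ∑_{j=1}^{k} 1/2^{jn}. -/
/-- A round function of a target-heavy `n:kn`-UFN: input `n` bits, output `kn` bits,
with `f R j` the `(j+1)`-st `n`-bit component `C_{j+1}(f(R))` of the output. -/
abbrev TgtRF (n k : ℕ) : Type := Blk n → (Fin k → Blk n)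

/-- One round of the `n:kn`-UFN:
`(L₁, …, L_k, R) ↦ (R, L₁ ⊕ C₁(f R), …, L_k ⊕ C_k(f R))`.
State coordinates `0, …, k-1` are `L₁, …, L_k` and coordinate `k` is `R`. -/
def tufnRound {n k : ℕ} (f : TgtRF n k) (s : St n k) : St n k :=
  fun i =>
    if h : (i : ℕ) = 0 then s (Fin.last k)
    else s ⟨(i : ℕ) - 1, by have := i.isLt; omega⟩ +
      f (s (Fin.last k)) ⟨(i : ℕ) - 1, by have := i.isLt; omega⟩

/-- The `r`-round `n:kn`-UFN with round functions `f 0, …, f (r-1)`, applied with `f 0` first. -/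
def tufnRun {n k : ℕ} : (r : ℕ) → (Fin r → TgtRF n k) → St n k → St n k
  | 0, _, s => s
  | r + 1, f, s => tufnRound (f (Fin.last r)) (tufnRun r (fun i => f i.castSucc) s)

theorem Finset.card_mul_card_le_of_lens {α β : Type*} [Fintype α] [Fintype β]
    (get : α → β) (set : α → β → α) (get_set : ∀ x v, get (set x v) = v)
    (set_get : ∀ x, set x (get x) = x) (set_set : ∀ x v w, set (set x v) w = set x w)
    (S : Finset α) (hS : ∀ x ∈ S, ∀ v, set x v ∈ S → v = get x) :
    S.card * Fintype.card β ≤ Fintype.card α := by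
  rw [← Finset.card_univ (α := β), ← Finset.card_product, ← Finset.card_univ (α := α)]
  refine Finset.card_le_card_of_injOn (fun p => set p.1 p.2)
    (fun _ _ => Finset.mem_coe.2 (Finset.mem_univ _)) ?_
  rintro ⟨x, v⟩ hx ⟨y, w⟩ hy hxy
  simp only [Finset.coe_product, Set.mem_prod, Finset.mem_coe] at hx hy hxy
  obtain rfl : v = w := by simpa only [get_set] using congrArg get hxy
  have hget : get x = get y :=
    hS y hy.1 _ (by rw [← set_set y v, ← hxy, set_set, set_get]; exact hx.1)
  obtain rfl : x = y := by rw [← set_get x, ← set_set x v, hxy, set_set, hget, set_get]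
  rfl

namespace TUFN

open Function Finset

variable {n k : ℕ}

def trajectory (F : ℕ → TgtRF n k) (s : St n k) : ℕ → St n k
  | 0 => s
  | i + 1 => tufnRound (F i) (trajectory F s i)

lemma trajectory_congr {F G : ℕ → TgtRF n k} (s : St n k) {m : ℕ} (h : ∀ i < m, F i = G i) :
    trajectory F s m = trajectory G s m := by
  induction m with
  | zero => rfl
  | succ m ih => simp only [trajectory, ih fun i hi => h i (by omega), h m (by omega)]

lemma tufnRun_eq_trajectory {r : ℕ} (G : Fin r → TgtRF n k) (F : ℕ → TgtRF n k)
    (hFG : ∀ i : Fin r, F i = G i) (s : St n k) : tufnRun r G s = trajectory F s r := by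
  induction r with
  | zero => rfl
  | succ r ih =>
    simp only [tufnRun, trajectory, ih _ fun i => hFG i.castSucc]
    rw [← hFG (Fin.last r), Fin.val_last]

lemma tufnRun_eq_trajectory_extend (F : Fin k → TgtRF n k) (s : St n k) :
    tufnRun k F s = trajectory (extend Fin.val F 0) s k :=
  tufnRun_eq_trajectory F _ (Fin.val_injective.extend_apply F 0) s

lemma trajectory_succ_apply_succ (F : ℕ → TgtRF n k) (s : St n k) (i : ℕ) (c : Fin k) :
    trajectory F s (i + 1) c.succ =
      trajectory F s i c.castSucc + F i (trajectory F s i (Fin.last k)) c := by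
  rw [trajectory, tufnRound]
  exact dif_neg (Nat.succ_ne_zero _)

section Collision

variable (F : ℕ → TgtRF n k) (xp xq : St n k)

lemma trajectory_eq_of_shifted_eq {j : ℕ} : ∀ {t c : ℕ} (hct : c + t ≤ k),
    (∀ i, j ≤ i → i < j + t →
      trajectory F xp i (Fin.last k) = trajectory F xq i (Fin.last k)) →
    trajectory F xp (j + t) ⟨c + t, by omega⟩ =
      trajectory F xq (j + t) ⟨c + t, by omega⟩ →
    trajectory F xp j ⟨c, by omega⟩ = trajectory F xq j ⟨c, by omega⟩
  | 0, _, _, _, h => h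
  | t + 1, c, hct, hR, h => by
    refine trajectory_eq_of_shifted_eq (t := t) (by omega) (fun i hi hit => hR i hi (by omega)) ?_
    rw [← add_assoc,
      show (⟨c + (t + 1), _⟩ : Fin (k + 1)) = (⟨c + t, by omega⟩ : Fin k).succ from rfl,
      trajectory_succ_apply_succ, trajectory_succ_apply_succ, hR (j + t) (by omega) (by omega)] at h
    exact add_right_cancel h

/-- What collisions of the right blocks in all rounds after `m` force when `R_p^m ≠ R_q^m`:
the components `c ≥ m` of `f_m(R_p^m)` are determined by `f_m(R_q^m)` and the state after
`m` rounds. -/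
def ForcesCollisionAt (m : Fin k) : Prop :=
  trajectory F xp m (Fin.last k) ≠ trajectory F xq m (Fin.last k) ∧
    ∀ c, m ≤ c → F m (trajectory F xp m (Fin.last k)) c =
      trajectory F xq m c.castSucc + F m (trajectory F xq m (Fin.last k)) c -
        trajectory F xp m c.castSucc

lemma forcesCollisionAt_of_eq_after {m : Fin k}
    (hm : trajectory F xp m (Fin.last k) ≠ trajectory F xq m (Fin.last k))
    (hafter : ∀ i : ℕ, m < i → i ≤ k →
      trajectory F xp i (Fin.last k) = trajectory F xq i (Fin.last k)) :
    ForcesCollisionAt F xp xq m := by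
  refine ⟨hm, fun c hc => eq_sub_of_add_eq' ?_⟩
  have hlast : (⟨c + 1 + (k - 1 - c), by omega⟩ : Fin (k + 1)) = Fin.last k :=
    Fin.ext (by simp only [Fin.val_last]; omega)
  have h := trajectory_eq_of_shifted_eq F xp xq (j := m + 1) (t := k - 1 - c) (c := c + 1)
    (by omega) (fun i hi hik => hafter i (by omega) (by omega))
    (by rw [hlast]; exact hafter _ (by omega) (by omega))
  rwa [show (⟨c + 1, _⟩ : Fin (k + 1)) = c.succ from rfl, trajectory_succ_apply_succ,
    trajectory_succ_apply_succ] at h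

lemma exists_forcesCollisionAt (hne : xp ≠ xq)
    (hk : trajectory F xp k (Fin.last k) = trajectory F xq k (Fin.last k)) :
    ∃ m, ForcesCollisionAt F xp xq m := by
  suffices ∀ j ≤ k, (∀ i, j ≤ i → i ≤ k →
      trajectory F xp i (Fin.last k) = trajectory F xq i (Fin.last k)) →
      xp = xq ∨ ∃ m, ForcesCollisionAt F xp xq m from
    (this k le_rfl fun i hki hik => le_antisymm hik hki ▸ hk).resolve_left hne
  intro j
  induction j with
  | zero =>
    refine fun _ hR => Or.inl (funext fun c => ?_)
    have hlast : (⟨c + (k - c), by omega⟩ : Fin (k + 1)) = Fin.last k :=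
      Fin.ext (by simp only [Fin.val_last]; omega)
    exact trajectory_eq_of_shifted_eq F xp xq (j := 0) (t := k - c) (c := c) (by omega)
      (fun i _ hi => hR i (by omega) (by omega)) (by rw [hlast]; exact hR _ (by omega) (by omega))
  | succ j ih =>
    intro hj hR
    by_cases hRj : trajectory F xp j (Fin.last k) = trajectory F xq j (Fin.last k)
    · exact ih (by omega) fun i hji hik =>
        (eq_or_lt_of_le hji).elim (fun h => h ▸ hRj) fun h => hR i h hik
    · exact Or.inr ⟨⟨j, by omega⟩, forcesCollisionAt_of_eq_after F xp xq hRj hR⟩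

end Collision

lemma trajectory_extend_update_self (F : Fin k → TgtRF n k) (m : Fin k) (g : TgtRF n k)
    (s : St n k) :
    trajectory (extend Fin.val (update F m g) 0) s m = trajectory (extend Fin.val F 0) s m := by
  refine trajectory_congr s fun i hi => ?_
  have him : (⟨i, hi.trans m.2⟩ : Fin k) ≠ m := Fin.ne_of_lt hi
  rw [show i = ((⟨i, hi.trans m.2⟩ : Fin k) : ℕ) from rfl, Fin.val_injective.extend_apply,
    Fin.val_injective.extend_apply, update_of_ne him]

open scoped Classical in
lemma card_forcesCollisionAt_mul_le (xp xq : St n k) (m : Fin k) :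
    #{F : Fin k → TgtRF n k | ForcesCollisionAt (extend Fin.val F 0) xp xq m} *
      2 ^ ((k - m) * n) ≤ Fintype.card (Fin k → TgtRF n k) := by
  let a (F : Fin k → TgtRF n k) : Blk n := trajectory (extend Fin.val F 0) xp m (Fin.last k)
  let get (F : Fin k → TgtRF n k) (c : Ici m) : Blk n := F m (a F) c
  let set (F : Fin k → TgtRF n k) (v : Ici m → Blk n) : Fin k → TgtRF n k :=
    update F m <| update (F m) (a F) fun c =>
      if h : m ≤ c then v ⟨c, mem_Ici.2 h⟩ else F m (a F) c
  have trajectory_set : ∀ F v s, trajectory (extend Fin.val (set F v) 0) s m =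
      trajectory (extend Fin.val F 0) s m := fun F v s => trajectory_extend_update_self F m _ s
  have a_set : ∀ F v, a (set F v) = a F := fun F v => congrFun (trajectory_set F v xp) _
  have hcard : Fintype.card (Ici m → Blk n) = 2 ^ ((k - m) * n) := by
    rw [Fintype.card_fun, Fintype.card_coe, Fin.card_Ici, Fintype.card_fun, ZMod.card,
      Fintype.card_fin, ← pow_mul, mul_comm]
  rw [← hcard]
  refine card_mul_card_le_of_lens get set ?_ ?_ ?_ _ ?_
  · intro F v; funext c; simp [get, set, a_set, mem_Ici.1 c.2]
  · intro F; simp [get, set]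
  · intro F v w
    simp only [set, a_set, update_idem, update_self]
    congr 2; funext c; split_ifs <;> rfl
  · intro F hF v hv
    obtain ⟨hab, hpin⟩ := (mem_filter.1 hF).2
    obtain ⟨-, hpin'⟩ := (mem_filter.1 hv).2
    funext c
    have hc := mem_Ici.1 c.2
    have hF := hpin c hc
    have hv := hpin' c hc
    simp only [trajectory_set, Fin.val_injective.extend_apply] at hF hv
    simp only [set, a, update_self, update_of_ne (Ne.symm hab), hc, dite_true] at hv
    exact hv.trans hF.symm

end TUFN

theorem Fin.sum_univ_sub_eq_sum_Icc {M : Type*} [AddCommMonoid M] (f : ℕ → M) (k : ℕ) :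
    ∑ m : Fin k, f (k - m) = ∑ j ∈ Finset.Icc 1 k, f j := by
  induction k with
  | zero => simp
  | succ k ih =>
    rw [Fin.sum_univ_succ, Finset.sum_Icc_succ_top (by omega), ← ih, add_comm]
    simp

open scoped Classical in
theorem tufn_last_block_collision_probability_general (n k : ℕ)
    (xp xq : St n k) (hne : xp ≠ xq) :
    ((Finset.univ.filter (fun F : Fin k → TgtRF n k =>
        tufnRun k F xp (Fin.last k) = tufnRun k F xq (Fin.last k))).card : ℝ) /
      (Fintype.card (Fin k → TgtRF n k) : ℝ) ≤
      ∑ j ∈ Finset.Icc 1 k, (1 : ℝ) / (2 : ℝ) ^ (j * n) := by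
  open TUFN Finset Function in
  have hsub : ({F | tufnRun k F xp (Fin.last k) = tufnRun k F xq (Fin.last k)} :
      Finset (Fin k → TgtRF n k)) ⊆
      univ.biUnion fun m => {F | ForcesCollisionAt (extend Fin.val F 0) xp xq m} := by
    intro F hF
    rw [mem_filter, tufnRun_eq_trajectory_extend, tufnRun_eq_trajectory_extend] at hF
    obtain ⟨m, hm⟩ := exists_forcesCollisionAt _ xp xq hne hF.2
    exact mem_biUnion.2 ⟨m, mem_univ _, mem_filter.2 ⟨mem_univ _, hm⟩⟩
  have hcard : (0 : ℝ) < Fintype.card (Fin k → TgtRF n k) := by exact_mod_cast Fintype.card_pos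
  calc _ ≤ ∑ m : Fin k, (#{F | ForcesCollisionAt (extend Fin.val F 0) xp xq m} : ℝ) /
        Fintype.card (Fin k → TgtRF n k) := by
        rw [← sum_div]
        gcongr
        exact_mod_cast (card_le_card hsub).trans card_biUnion_le
    _ ≤ ∑ m : Fin k, (1 : ℝ) / 2 ^ ((k - m) * n) := sum_le_sum fun m _ => by
        rw [div_le_div_iff₀ hcard (by positivity), one_mul]
        exact_mod_cast card_forcesCollisionAt_mul_le xp xq m
    _ = _ := Fin.sum_univ_sub_eq_sum_Icc (fun j => (1 : ℝ) / 2 ^ (j * n)) k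

open scoped Classical in
/-- **per-pair collision estimate from the proof of Lemma 3.4.** For two distinct
initial states of the `n:kn`-UFN and a uniformly random tuple of `k` round functions, the
probability that the last blocks collide after `k` rounds, `R_p^k = R_q^k`, is at most
`∑_{j=1}^{k} 1/2^{jn}`. -/
theorem tufn_last_block_collision_probability (n k : ℕ) (hn : 1 ≤ n) (hk : 1 ≤ k)
    (xp xq : St n k) (hne : xp ≠ xq) :
    ((Finset.univ.filter (fun F : Fin k → TgtRF n k =>
        tufnRun k F xp (Fin.last k) = tufnRun k F xq (Fin.last k))).card : ℝ) /
      (Fintype.card (Fin k → TgtRF n k) : ℝ) ≤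
      ∑ j ∈ Finset.Icc 1 k, (1 : ℝ) / (2 : ℝ) ^ (j * n) :=
  tufn_last_block_collision_probability_general n k xp xq hne
end

section
/- Let n, k, m ≥ 1 and let x₁, …, x_m be m distinct initial states of the n:kn-UFN. Draw a tuple (f₁, …, f_{k+2}) of round functions uniformly at random from all tuples of functions (Fin n → ZMod 2) → (Fin k → (Fin n → ZMod 2)). Let the BAD event ξ be: there exist a round index i ∈ {k, k+1} and query indices p < q such that the last blocks collide, R_p^i = R_q^i, where R_p^i is the last block of the state of query x_p after i rounds. Then Pr[ξ] ≤ m² / 2^n. -/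
theorem Function.Injective.extend_update {α β γ : Type*} [DecidableEq α] [DecidableEq β]
    {f : α → β} (hf : Function.Injective f) (g : α → γ) (e : β → γ) (a : α) (v : γ) :
    Function.extend f (Function.update g a v) e = Function.update (Function.extend f g e) (f a) v := by
  funext b
  by_cases hb : ∃ a', f a' = b
  · obtain ⟨a', rfl⟩ := hb
    simp only [hf.extend_apply, Function.update_apply, hf.eq_iff]
  · rw [Function.extend_apply' _ _ _ hb, Function.update_of_ne (fun h => hb ⟨a, h.symm⟩),
      Function.extend_apply' _ _ _ hb]

theorem Nat.findGreatest_congr {P Q : ℕ → Prop} [DecidablePred P] [DecidablePred Q] {b : ℕ}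
    (h : ∀ s ≤ b, P s ↔ Q s) : Nat.findGreatest P b = Nat.findGreatest Q b := by
  rw [Nat.findGreatest_eq_iff]
  refine ⟨Nat.findGreatest_le b, fun h0 => ?_, fun s hs hsb hP => ?_⟩
  · exact (h _ (Nat.findGreatest_le b)).2 (Nat.findGreatest_of_ne_zero rfl h0)
  · exact Nat.findGreatest_is_greatest hs hsb ((h s hsb).1 hP)

open Finset

namespace UFN

variable {n k : ℕ}

theorem tufnRound_eq_cons (f : TgtRF n k) (u : St n k) :
    tufnRound f u = Fin.cons (u (Fin.last k)) (Fin.init u + f (u (Fin.last k))) := by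
  funext ℓ
  refine Fin.cases ?_ (fun j => ?_) ℓ
  · simp [tufnRound]
  · rw [Fin.cons_succ]
    exact dif_neg (Fin.val_ne_of_ne j.succ_ne_zero)

theorem tufnRound_injective (f : TgtRF n k) : Function.Injective (tufnRound f) := by
  intro u v h
  rw [tufnRound_eq_cons, tufnRound_eq_cons, Fin.cons_inj] at h
  obtain ⟨hlast, hinit⟩ := h
  rw [hlast, add_left_inj] at hinit
  rw [← Fin.snoc_init_self u, ← Fin.snoc_init_self v, hinit, hlast]

theorem tufnRound_sub_tufnRound (f g : TgtRF n k) (u v : St n k) :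
    tufnRound f u - tufnRound g v = Fin.cons (u (Fin.last k) - v (Fin.last k))
      (Fin.init u - Fin.init v + (f (u (Fin.last k)) - g (v (Fin.last k)))) := by
  rw [tufnRound_eq_cons, tufnRound_eq_cons]
  funext ℓ
  refine Fin.cases ?_ (fun j => ?_) ℓ
  · simp
  · simp only [Pi.sub_apply, Fin.cons_succ, Pi.add_apply]
    abel

def state (F : ℕ → TgtRF n k) (x : St n k) : ℕ → St n k
  | 0 => x
  | s + 1 => tufnRound (F s) (state F x s)

theorem tufnRun_eq_state {r : ℕ} (f : Fin r → TgtRF n k) (F : ℕ → TgtRF n k)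
    (hF : ∀ j : Fin r, F j = f j) (x : St n k) : tufnRun r f x = state F x r := by
  induction r with
  | zero => rfl
  | succ r ih =>
    rw [tufnRun, ih _ fun j => hF j.castSucc, ← hF (Fin.last r)]
    rfl

theorem state_add (F : ℕ → TgtRF n k) (x : St n k) (s d : ℕ) :
    state F x (s + d) = state (fun j => F (s + j)) (state F x s) d := by
  induction d with
  | zero => rfl
  | succ d ih => rw [← Nat.add_assoc, state, ih, state]

theorem state_congr {F G : ℕ → TgtRF n k} {x : St n k} {s : ℕ}
    (h : ∀ j < s, G j (state F x j (Fin.last k)) = F j (state F x j (Fin.last k))) :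
    state G x s = state F x s := by
  induction s with
  | zero => rfl
  | succ s ih =>
    rw [state, state, ih fun j hj => h j (by omega), tufnRound_eq_cons, tufnRound_eq_cons,
      h s (by omega)]

theorem state_injective (F : ℕ → TgtRF n k) (s : ℕ) :
    Function.Injective fun x : St n k => state F x s := by
  induction s with
  | zero => exact Function.injective_id
  | succ s ih => exact (tufnRound_injective (F s)).comp ih

theorem state_sub_state_shift (F : ℕ → TgtRF n k) {u v : St n k} {d : ℕ}
    (h : ∀ j < d, state F u j (Fin.last k) = state F v j (Fin.last k)) (ℓ : ℕ) (hℓ : ℓ + d ≤ k) :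
    state F u d ⟨ℓ + d, by omega⟩ - state F v d ⟨ℓ + d, by omega⟩ =
      u ⟨ℓ, by omega⟩ - v ⟨ℓ, by omega⟩ := by
  induction d with
  | zero => rfl
  | succ d ih =>
    have hlast := h d (by omega)
    rw [state, state, ← Pi.sub_apply (tufnRound _ _), tufnRound_sub_tufnRound, hlast, sub_self,
      sub_self, add_zero, ← ih (fun j hj => h j (by omega)) (by omega)]
    exact Fin.cons_succ (α := fun _ => Blk n) _ _ (⟨ℓ + d, by omega⟩ : Fin k)

theorem eq_of_state_last_eq (F : ℕ → TgtRF n k) {u v : St n k}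
    (h : ∀ j ≤ k, state F u j (Fin.last k) = state F v j (Fin.last k)) : u = v := by
  funext ℓ
  have hshift := state_sub_state_shift F (d := k - ℓ) (fun j hj => h j (by omega)) ℓ (by omega)
  have hlast : (⟨ℓ + (k - ℓ), by omega⟩ : Fin (k + 1)) = Fin.last k := Fin.ext (by simp; omega)
  rwa [hlast, h _ (by omega), sub_self, eq_comm, sub_eq_zero] at hshift

theorem exists_state_last_ne {F : ℕ → TgtRF n k} {x y : St n k} (hxy : x ≠ y) {i : ℕ}
    (hi : k ≤ i) (hcol : state F x i (Fin.last k) = state F y i (Fin.last k)) :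
    ∃ s, i - k ≤ s ∧ s < i ∧ state F x s (Fin.last k) ≠ state F y s (Fin.last k) := by
  by_contra! hagree
  refine hxy (state_injective F (i - k) (eq_of_state_last_eq (fun j => F (i - k + j)) ?_))
  intro j hj
  simp only [← state_add]
  rcases hj.lt_or_eq with hj | hj
  · exact hagree _ (by omega) (by omega)
  · rwa [hj, Nat.sub_add_cancel hi]

theorem state_sub_state_single (F : ℕ → TgtRF n k) {u v : St n k} {j d : ℕ} (hjd : j + d ≤ k)
    (e : Blk n) (h : u - v = Pi.single ⟨j, by omega⟩ e) :
    state F u d - state F v d = Pi.single ⟨j + d, by omega⟩ e := by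
  induction d with
  | zero => exact h
  | succ d ih =>
    have hd := ih (by omega) h
    have hlast : state F u d (Fin.last k) = state F v d (Fin.last k) := by
      rw [← sub_eq_zero, ← Pi.sub_apply, hd, Pi.single_eq_of_ne (Fin.ne_of_val_ne (by simp; omega))]
    rw [state, state, tufnRound_sub_tufnRound, hlast, sub_self, sub_self, add_zero]
    funext ℓ
    refine Fin.cases ?_ (fun ℓ => ?_) ℓ
    · simp [Fin.ext_iff]
    · have hℓ := congrFun hd ℓ.castSucc
      simp only [Pi.sub_apply] at hℓ
      simp [Fin.init, hℓ, Pi.single_apply, Fin.ext_iff, ← Nat.add_assoc]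

def updateAt {ι : Type*} [DecidableEq ι] (F : ι → TgtRF n k) (t : ι) (a : Blk n) (c : Fin k)
    (w : Blk n) : ι → TgtRF n k :=
  Function.update F t (Function.update (F t) a (Function.update (F t a) c w))

theorem updateAt_updateAt_self {ι : Type*} [DecidableEq ι] (F : ι → TgtRF n k) (t : ι)
    (a : Blk n) (c : Fin k) (w : Blk n) : updateAt (updateAt F t a c w) t a c (F t a c) = F := by
  simp [updateAt]

theorem updateAt_apply_self {ι : Type*} [DecidableEq ι] (F : ι → TgtRF n k) (t : ι)
    (a : Blk n) (c : Fin k) (w : Blk n) : updateAt F t a c w t a c = w := by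
  simp [updateAt]

theorem state_updateAt_of_le (F : ℕ → TgtRF n k) (x : St n k) {t s : ℕ} (hs : s ≤ t)
    (a : Blk n) (c : Fin k) (w : Blk n) : state (updateAt F t a c w) x s = state F x s :=
  state_congr fun j hj => by rw [updateAt, Function.update_of_ne (by omega)]

theorem state_updateAt_of_ne (F : ℕ → TgtRF n k) {y : St n k} {t : ℕ} {a : Blk n}
    (hy : state F y t (Fin.last k) ≠ a) (c : Fin k) (w : Blk n) (s : ℕ) :
    state (updateAt F t a c w) y s = state F y s :=
  state_congr fun j _ => by
    by_cases hj : j = t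
    · subst hj
      rw [updateAt, Function.update_self, Function.update_of_ne hy]
    · rw [updateAt, Function.update_of_ne hj]

theorem state_updateAt_sub (F : ℕ → TgtRF n k) {x : St n k} {t : ℕ} {a : Blk n}
    (hx : state F x t (Fin.last k) = a) (c : Fin k) (w : Blk n) {d : ℕ} (hd : c + 1 + d ≤ k) :
    state (updateAt F t a c w) x (t + 1 + d) - state F x (t + 1 + d) =
      Pi.single ⟨c + 1 + d, by omega⟩ (w - F t a c) := by
  have hlater : (fun j => updateAt F t a c w (t + 1 + j)) = fun j => F (t + 1 + j) :=
    funext fun j => by rw [updateAt, Function.update_of_ne (by omega)]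
  rw [state_add, state_add F, hlater]
  refine state_sub_state_single _ hd _ ?_
  rw [state, state, state_updateAt_of_le F x le_rfl, tufnRound_sub_tufnRound, sub_self, sub_self,
    zero_add, hx, updateAt, Function.update_self, Function.update_self]
  funext ℓ
  refine Fin.cases ?_ (fun ℓ => ?_) ℓ
  · simp [Fin.ext_iff]
  · obtain rfl | hℓ := eq_or_ne ℓ c
    · simp [Pi.single_apply, Fin.ext_iff]
    · simp [hℓ, Fin.ext_iff, Fin.val_ne_of_ne hℓ]

theorem state_updateAt_last_of_lt (F : ℕ → TgtRF n k) {x : St n k} {t : ℕ} {a : Blk n}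
    (hx : state F x t (Fin.last k) = a) (c : Fin k) (w : Blk n) {s : ℕ} (hs : s < t + (k - c)) :
    state (updateAt F t a c w) x s (Fin.last k) = state F x s (Fin.last k) := by
  rcases le_or_gt s t with hst | hst
  · rw [state_updateAt_of_le F x hst]
  · obtain ⟨d, rfl⟩ : ∃ d, s = t + 1 + d := ⟨s - t - 1, by omega⟩
    rw [← sub_eq_zero, ← Pi.sub_apply, state_updateAt_sub F hx c w (by omega),
      Pi.single_eq_of_ne (Fin.ne_of_val_ne (by simp; omega))]

theorem state_updateAt_last_arrival (F : ℕ → TgtRF n k) {x : St n k} {t : ℕ} {a : Blk n}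
    (hx : state F x t (Fin.last k) = a) (c : Fin k) (w : Blk n) :
    state (updateAt F t a c w) x (t + (k - c)) (Fin.last k) =
      state F x (t + (k - c)) (Fin.last k) + (w - F t a c) := by
  rw [← sub_eq_iff_eq_add', ← Pi.sub_apply, show t + (k - c) = t + 1 + (k - c - 1) by omega,
    state_updateAt_sub F hx c w (by omega)]
  simp [Pi.single_apply, Fin.ext_iff]
  omega

def lastDiffRound (F : ℕ → TgtRF n k) (x y : St n k) (i : ℕ) : ℕ :=
  Nat.findGreatest (fun s => state F x s (Fin.last k) ≠ state F y s (Fin.last k)) (i - 1)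

section Collision

variable {F : ℕ → TgtRF n k} {x y : St n k} {i : ℕ}

theorem lastDiffRound_spec (hxy : x ≠ y) (hi : k ≤ i)
    (hcol : state F x i (Fin.last k) = state F y i (Fin.last k)) :
    i - k ≤ lastDiffRound F x y i ∧ lastDiffRound F x y i < i ∧
      state F x (lastDiffRound F x y i) (Fin.last k) ≠
        state F y (lastDiffRound F x y i) (Fin.last k) := by
  obtain ⟨s, hks, hsi, hs⟩ := exists_state_last_ne hxy hi hcol
  exact ⟨hks.trans (Nat.le_findGreatest (by omega) hs), (Nat.findGreatest_le _).trans_lt (by omega),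
    Nat.findGreatest_spec (P := fun s => state F x s (Fin.last k) ≠ state F y s (Fin.last k))
      (by omega) hs⟩

theorem lastDiffRound_updateAt (hxy : x ≠ y) (hi : k ≤ i)
    (hcol : state F x i (Fin.last k) = state F y i (Fin.last k)) {t : ℕ}
    (ht : lastDiffRound F x y i = t) (c : Fin k) (hc : c + i = t + k) (w : Blk n) :
    lastDiffRound (updateAt F t (state F x t (Fin.last k)) c w) x y i = t := by
  obtain ⟨-, hti, hne⟩ := ht ▸ lastDiffRound_spec hxy hi hcol
  rw [← ht]
  refine Nat.findGreatest_congr fun s hs => ?_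
  rw [ht, state_updateAt_last_of_lt F rfl c w (by omega), state_updateAt_of_ne F (Ne.symm hne)]

end Collision

variable {r : ℕ}

noncomputable def roundSeq (F : Fin r → TgtRF n k) : ℕ → TgtRF n k :=
  Function.extend Fin.val F 0

theorem roundSeq_apply (F : Fin r → TgtRF n k) (j : Fin r) : roundSeq F j = F j :=
  Fin.val_injective.extend_apply F 0 j

theorem roundSeq_updateAt (F : Fin r → TgtRF n k) (t : Fin r) (a : Blk n) (c : Fin k)
    (w : Blk n) : roundSeq (updateAt F t a c w) = updateAt (roundSeq F) t a c w := by
  rw [roundSeq, updateAt, Fin.val_injective.extend_update, updateAt, ← roundSeq, roundSeq_apply]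

theorem tufnRun_castLE_eq_state (F : Fin r → TgtRF n k) {i : ℕ} (h : i ≤ r) (x : St n k) :
    tufnRun i (fun t => F (Fin.castLE h t)) x = state (roundSeq F) x i :=
  tufnRun_eq_state _ _ (fun j => roundSeq_apply F (Fin.castLE h j)) x

noncomputable def collisions (r : ℕ) (x y : St n k) (i : ℕ) : Finset (Fin r → TgtRF n k) :=
  {F | state (roundSeq F) x i (Fin.last k) = state (roundSeq F) y i (Fin.last k)}

theorem mem_collisions {x y : St n k} {i : ℕ} {F : Fin r → TgtRF n k} :
    F ∈ collisions r x y i ↔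
      state (roundSeq F) x i (Fin.last k) = state (roundSeq F) y i (Fin.last k) := by
  simp [collisions]

/-- An ordered pair `(p, q)` stands for the collision of `x p` and `x q` at round `k` if `p < q`
and at round `k + 1` if `q < p`. -/
theorem mem_biUnion_collisions {m : ℕ} {x : Fin m → St n k} {F : Fin (k + 2) → TgtRF n k}
    {i : ℕ} (hki : k ≤ i) (hik : i ≤ k + 1) {p q : Fin m} (hpq : p < q)
    (hcol : state (roundSeq F) (x p) i (Fin.last k) = state (roundSeq F) (x q) i (Fin.last k)) :
    F ∈ (univ : Finset (Fin m)).offDiag.biUnion fun z =>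
      collisions (k + 2) (x z.1) (x z.2) (if z.1 < z.2 then k else k + 1) := by
  simp only [mem_biUnion, mem_offDiag, mem_univ, true_and, mem_collisions]
  obtain rfl | rfl : i = k ∨ i = k + 1 := by omega
  · exact ⟨(p, q), hpq.ne, by simpa [hpq] using hcol⟩
  · exact ⟨(q, p), hpq.ne', by simpa [hpq.not_gt] using hcol.symm⟩

variable [NeZero r] [NeZero k]

/-- The output block `c = t + k - i` is the one whose change in round `t` reaches the last block
exactly at round `i`. -/
noncomputable def switchPoint (x y : St n k) (i : ℕ) (F : Fin r → TgtRF n k) : Fin r × Blk n × Fin k :=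
  let t := lastDiffRound (roundSeq F) x y i
  (Fin.ofNat r t, state (roundSeq F) x t (Fin.last k), Fin.ofNat k (t + k - i))

noncomputable def switch (x y : St n k) (i : ℕ) (F : Fin r → TgtRF n k) (w : Blk n) : Fin r → TgtRF n k :=
  updateAt F (switchPoint x y i F).1 (switchPoint x y i F).2.1 (switchPoint x y i F).2.2 w

section Switch

variable {x y : St n k} {i : ℕ} {F : Fin r → TgtRF n k}

theorem switch_spec (hxy : x ≠ y) (hi : k ≤ i) (hir : i ≤ r) (hF : F ∈ collisions r x y i)
    (w : Blk n) :
    switchPoint x y i (switch x y i F w) = switchPoint x y i F ∧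
      state (roundSeq (switch x y i F w)) x i (Fin.last k) -
          state (roundSeq (switch x y i F w)) y i (Fin.last k) =
        w - F (switchPoint x y i F).1 (switchPoint x y i F).2.1 (switchPoint x y i F).2.2 := by
  rw [mem_collisions] at hF
  obtain ⟨hkt, hti, hne⟩ := lastDiffRound_spec hxy hi hF
  set t := lastDiffRound (roundSeq F) x y i with ht
  have htr : (Fin.ofNat r t : ℕ) = t := by rw [Fin.val_ofNat, Nat.mod_eq_of_lt (by omega)]
  set c := Fin.ofNat k (t + k - i) with hc
  have hcv : (c : ℕ) = t + k - i := by rw [Fin.val_ofNat, Nat.mod_eq_of_lt (by omega)]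
  have hseq : roundSeq (switch x y i F w) =
      updateAt (roundSeq F) t (state (roundSeq F) x t (Fin.last k)) c w := by
    rw [switch, roundSeq_updateAt]
    simp only [switchPoint, ← ht, htr, ← hc]
  refine ⟨?_, ?_⟩
  · simp only [switchPoint, hseq, lastDiffRound_updateAt hxy hi hF ht.symm c (by omega),
      state_updateAt_of_le _ x le_rfl, ← ht, ← hc]
  · have hFt : roundSeq F t = F (Fin.ofNat r t) := by rw [← roundSeq_apply F, htr]
    have hi' : i = t + (k - c) := by omega
    rw [hseq, hi', state_updateAt_last_arrival _ rfl, state_updateAt_of_ne _ (Ne.symm hne), ← hi',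
      hF, hFt, add_sub_cancel_left]
    rfl

noncomputable def unswitch (x y : St n k) (i : ℕ) (G : Fin r → TgtRF n k) :
    (Fin r → TgtRF n k) × Blk n :=
  let p := switchPoint x y i G
  let w := G p.1 p.2.1 p.2.2
  (updateAt G p.1 p.2.1 p.2.2
    (w - (state (roundSeq G) x i (Fin.last k) - state (roundSeq G) y i (Fin.last k))), w)

theorem unswitch_switch (hxy : x ≠ y) (hi : k ≤ i) (hir : i ≤ r) (hF : F ∈ collisions r x y i)
    (w : Blk n) : unswitch x y i (switch x y i F w) = (F, w) := by
  obtain ⟨hp, hd⟩ := switch_spec hxy hi hir hF w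
  have hw : switch x y i F w (switchPoint x y i F).1 (switchPoint x y i F).2.1
      (switchPoint x y i F).2.2 = w := updateAt_apply_self ..
  simp only [unswitch, hp, hd, hw, sub_sub_cancel]
  rw [switch, updateAt_updateAt_self]

end Switch

theorem card_collisions_mul_le {x y : St n k} (hxy : x ≠ y) {i : ℕ} (hi : k ≤ i) (hir : i ≤ r) :
    #(collisions r x y i) * 2 ^ n ≤ Fintype.card (Fin r → TgtRF n k) := by
  have hinj : Set.InjOn (fun Fw : (Fin r → TgtRF n k) × Blk n => switch x y i Fw.1 Fw.2)
      (collisions r x y i ×ˢ (univ : Finset (Blk n)) : Finset _) :=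
    Set.LeftInvOn.injOn (f₁' := unswitch x y i) fun Fw hFw =>
      unswitch_switch hxy hi hir (mem_product.1 hFw).1 Fw.2
  calc #(collisions r x y i) * 2 ^ n
      = #(collisions r x y i ×ˢ (univ : Finset (Blk n))) := by simp
    _ ≤ Fintype.card (Fin r → TgtRF n k) :=
      card_le_card_of_injOn _ (fun _ _ => mem_coe.2 (mem_univ _)) hinj

theorem card_biUnion_collisions_mul_le {m : ℕ} {x : Fin m → St n k} (hx : Function.Injective x)
    (roundOf : Fin m × Fin m → ℕ) (hround : ∀ z, k ≤ roundOf z ∧ roundOf z ≤ r) :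
    #((univ : Finset (Fin m)).offDiag.biUnion fun z => collisions r (x z.1) (x z.2) (roundOf z)) *
      2 ^ n ≤ m ^ 2 * Fintype.card (Fin r → TgtRF n k) :=
  calc _ ≤ (∑ z ∈ (univ : Finset (Fin m)).offDiag,
          #(collisions r (x z.1) (x z.2) (roundOf z))) * 2 ^ n :=
        Nat.mul_le_mul_right _ card_biUnion_le
    _ = ∑ z ∈ (univ : Finset (Fin m)).offDiag, #(collisions r (x z.1) (x z.2) (roundOf z)) * 2 ^ n :=
        sum_mul ..
    _ ≤ ∑ _z ∈ (univ : Finset (Fin m)).offDiag, Fintype.card (Fin r → TgtRF n k) :=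
        sum_le_sum fun z hz =>
          card_collisions_mul_le (hx.ne (mem_offDiag.1 hz).2.2) (hround z).1 (hround z).2
    _ ≤ m ^ 2 * Fintype.card (Fin r → TgtRF n k) := by
        rw [sum_const, smul_eq_mul, offDiag_card, card_univ, Fintype.card_fin, sq]
        exact Nat.mul_le_mul_right _ (Nat.sub_le _ _)

end UFN

open scoped Classical in
/-- **Lemma 3.4.** For `m` distinct initial states and a uniformly random tuple
of `k+2` round functions of the `n:kn`-UFN, the probability of the BAD event — some round
`i ∈ {k, k+1}` and queries `p < q` whose last blocks collide, `R_p^i = R_q^i` — is at most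
`m² / 2^n`. -/
theorem tufn_bad_event_probability (n k m : ℕ) (hk : 1 ≤ k)
    (x : Fin m → St n k) (hx : Function.Injective x) :
    ((Finset.univ.filter (fun F : Fin (k + 2) → TgtRF n k =>
        ∃ i, ∃ _ : k ≤ i, ∃ h2 : i ≤ k + 1, ∃ p q : Fin m, p < q ∧
          tufnRun i (fun t => F (Fin.castLE (by omega) t)) (x p) (Fin.last k) =
          tufnRun i (fun t => F (Fin.castLE (by omega) t)) (x q) (Fin.last k))).card : ℝ) /
      (Fintype.card (Fin (k + 2) → TgtRF n k) : ℝ) ≤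
      (m : ℝ) ^ 2 / (2 : ℝ) ^ n := by
  have : NeZero k := ⟨by omega⟩
  rw [div_le_div_iff₀ (by positivity) (by positivity)]
  norm_cast
  refine (Nat.mul_le_mul_right _ (card_le_card fun F hF => ?_)).trans
    (UFN.card_biUnion_collisions_mul_le hx (fun z => if z.1 < z.2 then k else k + 1)
      fun z => by split_ifs <;> omega)
  obtain ⟨i, hki, hik, p, q, hpq, hcol⟩ := (mem_filter.1 hF).2
  rw [UFN.tufnRun_castLE_eq_state, UFN.tufnRun_castLE_eq_state] at hcol
  exact UFN.mem_biUnion_collisions hki hik hpq hcol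
end

section
/- Let k ≥ 1 and let A be the (k+1) × (k+1) matrix over ZMod 2 indexed by Fin (k+1) with A i j = 0 if (i : ℕ) + (j : ℕ) = k and A i j = 1 otherwise (zeros exactly on the anti-diagonal, ones elsewhere). Then A is invertible (equivalently det A = 1 in ZMod 2) if and only if k is odd. -/
/-!
Over `ZMod 2` the matrix is `J + P`, where `J` is the all-ones matrix and `P` the permutation
matrix of `i ↦ k - i`. Since `P * J = J`, it factors as `P * (1 + J)`, and by the matrix
determinant lemma `det (1 + J) = 1 + (k + 1) = k` in `ZMod 2`.
-/

open Matrix Equiv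

section

variable {n R : Type*} [Fintype n] [DecidableEq n] [CommRing R]

theorem Matrix.det_one_add_ones :
    det (1 + of fun _ _ : n => (1 : R)) = 1 + (Fintype.card n : R) := by
  have hJ : (of fun _ _ : n => (1 : R)) =
      replicateCol Unit (fun _ : n => (1 : R)) * replicateRow Unit (fun _ : n => (1 : R)) := by
    ext; simp [Matrix.mul_apply]
  rw [hJ, det_one_add_replicateCol_mul_replicateRow]
  simp [dotProduct]

theorem Matrix.det_ones_add_permMatrix (σ : Perm n) :
    det ((of fun _ _ : n => (1 : R)) + σ.permMatrix R) =
      Perm.sign σ * (1 + (Fintype.card n : R)) := by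
  rw [← det_one_add_ones, ← det_permutation, ← det_mul, Matrix.mul_add, Matrix.mul_one, add_comm]
  congr 2
  ext i j
  simp [PEquiv.toMatrix_toPEquiv_mul]

theorem Matrix.isUnit_ones_add_permMatrix_iff (σ : Perm n) :
    IsUnit ((of fun _ _ : n => (1 : R)) + σ.permMatrix R) ↔
      IsUnit (1 + (Fintype.card n : R)) := by
  rw [isUnit_iff_isUnit_det, det_ones_add_permMatrix, IsUnit.mul_iff]
  exact and_iff_right ((Perm.sign σ).isUnit.map (Int.castRingHom R))

end

theorem Fin.rev_eq_iff_val_add_val_eq {k : ℕ} {i j : Fin (k + 1)} :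
    i.rev = j ↔ (i : ℕ) + j = k := by
  rw [Fin.ext_iff, Fin.val_rev]
  omega

theorem antidiagonal_zero_matrix_invertible_iff_odd_general (k : ℕ)
    (A : Matrix (Fin (k + 1)) (Fin (k + 1)) (ZMod 2))
    (hA : ∀ i j, A i j = if (i : ℕ) + (j : ℕ) = k then 0 else 1) :
    IsUnit A ↔ Odd k := by
  have hA_eq : A = (of fun _ _ => 1) + Fin.revPerm.permMatrix (ZMod 2) := by
    ext i j
    simp only [hA, Matrix.add_apply, of_apply, PEquiv.toMatrix_apply, toPEquiv_apply,
      Option.mem_def, Option.some.injEq, Fin.revPerm_apply, Fin.rev_eq_iff_val_add_val_eq]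
    split_ifs <;> rfl
  have hcard : 1 + (Fintype.card (Fin (k + 1)) : ZMod 2) = k := by
    rw [Fintype.card_fin, Nat.cast_succ, add_comm, add_assoc, CharTwo.add_self_eq_zero, add_zero]
  rw [hA_eq, isUnit_ones_add_permMatrix_iff, hcard, ZMod.isUnit_iff_coprime,
    Nat.coprime_two_right]

/-- **matrix from the proof of Lemma 4.1.** Let `A` be the
`(k+1) × (k+1)` matrix over `ZMod 2` with zeros exactly on the anti-diagonal
(`A i j = 0` iff `i + j = k`) and ones elsewhere.  Then `A` is invertible
(equivalently `det A = 1` in `ZMod 2`) if and only if `k` is odd. -/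
theorem antidiagonal_zero_matrix_invertible_iff_odd (k : ℕ) (hk : 1 ≤ k)
    (A : Matrix (Fin (k + 1)) (Fin (k + 1)) (ZMod 2))
    (hA : ∀ i j, A i j = if (i : ℕ) + (j : ℕ) = k then 0 else 1) :
    IsUnit A ↔ Odd k :=
  antidiagonal_zero_matrix_invertible_iff_odd_general k A hA
end

section
/- Let n ≥ 1, k ≥ 1, and let V = Fin n → ZMod 2. Define T : (Fin (k+1) → V) → (Fin (k+1) → V) by (T x) i = ⊕_{j : (i : ℕ) + (j : ℕ) ≠ k} x j (the XOR of all coordinates of x except the anti-diagonal partner of i). Then T is bijective if and only if k is odd. -/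
open Finset

section SumExcept

variable {ι V : Type*} [Fintype ι] [DecidableEq ι] [AddCommGroup V] [Module (ZMod 2) V]

def sumExcept (σ : Equiv.Perm ι) (x : ι → V) (i : ι) : V :=
  ∑ j ∈ univ.erase (σ i), x j

lemma ZModModule.nsmul_eq_zero_of_even {n : ℕ} (hn : Even n) (v : V) : n • v = 0 := by
  rw [← Nat.cast_smul_eq_nsmul (ZMod 2), (ZMod.natCast_eq_zero_iff_even).2 hn, zero_smul]

lemma ZModModule.nsmul_eq_self_of_odd {n : ℕ} (hn : Odd n) (v : V) : n • v = v := by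
  obtain ⟨c, rfl⟩ := hn
  rw [succ_nsmul, ZModModule.nsmul_eq_zero_of_even (even_two_mul c), zero_add]

variable (σ : Equiv.Perm ι) (x : ι → V)

lemma sumExcept_apply (i : ι) : sumExcept σ x i = ∑ j, x j + x (σ i) := by
  rw [sumExcept, ← sum_erase_add univ x (mem_univ (σ i)), add_assoc, ZModModule.add_self, add_zero]

lemma sum_sumExcept : ∑ i, sumExcept σ x i = (Fintype.card ι + 1) • ∑ j, x j := by
  simp only [sumExcept_apply, sum_add_distrib, sum_const, card_univ, Equiv.sum_comp σ x, succ_nsmul]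

lemma sumExcept_bijective_of_even (h : Even (Fintype.card ι)) :
    Function.Bijective (sumExcept (V := V) σ) := by
  have hsum (y : ι → V) : ∑ i, sumExcept σ y i = ∑ j, y j := by
    rw [sum_sumExcept, ZModModule.nsmul_eq_self_of_odd h.add_one]
  let g : (ι → V) → ι → V := fun y i => y (σ.symm i) + ∑ j, y j
  have hsum_g (y : ι → V) : ∑ i, g y i = ∑ j, y j := by
    simp only [g, sum_add_distrib, Equiv.sum_comp σ.symm y, sum_const, card_univ,
      ZModModule.nsmul_eq_zero_of_even h, add_zero]
  refine Function.bijective_iff_has_inverse.2 ⟨g, fun y => ?_, fun y => ?_⟩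
  · ext i
    dsimp only [g]
    rw [hsum, sumExcept_apply, Equiv.apply_symm_apply, add_comm, ← add_assoc, ZModModule.add_self,
      zero_add]
  · ext i
    rw [sumExcept_apply, hsum_g]
    dsimp only [g]
    rw [Equiv.symm_apply_apply, ← add_assoc, add_comm, ← add_assoc, ZModModule.add_self, zero_add]

lemma sum_sumExcept_eq_zero_of_odd (h : Odd (Fintype.card ι)) : ∑ i, sumExcept σ x i = 0 := by
  rw [sum_sumExcept, ZModModule.nsmul_eq_zero_of_even h.add_one]

lemma sumExcept_not_surjective_of_odd [Nontrivial V] (h : Odd (Fintype.card ι)) :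
    ¬Function.Surjective (sumExcept (V := V) σ) := by
  intro hsurj
  obtain ⟨v, hv⟩ := exists_ne (0 : V)
  obtain ⟨i₀⟩ := Fintype.card_pos_iff.1 h.pos
  obtain ⟨x, hx⟩ := hsurj (Pi.single i₀ v)
  have hzero := sum_sumExcept_eq_zero_of_odd σ x h
  rw [hx, sum_pi_single', if_pos (mem_univ i₀)] at hzero
  exact hv hzero

theorem sumExcept_bijective_iff [Nontrivial V] :
    Function.Bijective (sumExcept (V := V) σ) ↔ Even (Fintype.card ι) := by
  refine ⟨fun hbij => ?_, sumExcept_bijective_of_even σ⟩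
  by_contra hodd
  exact sumExcept_not_surjective_of_odd σ (Nat.not_even_iff_odd.1 hodd) hbij.2

end SumExcept

lemma Fin.filter_add_ne_eq_erase_rev {k : ℕ} (i : Fin (k + 1)) :
    univ.filter (fun j : Fin (k + 1) => (i : ℕ) + (j : ℕ) ≠ k) = univ.erase i.rev := by
  ext j
  simp only [mem_filter, mem_univ, true_and, mem_erase, and_true, ne_eq, Fin.ext_iff, Fin.val_rev]
  omega

theorem xor_except_antidiagonal_bijective_iff_odd_general (n k : ℕ) (hn : 1 ≤ n) :
    Function.Bijective
      (fun (x : Fin (k + 1) → Blk n) (i : Fin (k + 1)) =>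
        ∑ j ∈ Finset.univ.filter (fun j : Fin (k + 1) => (i : ℕ) + (j : ℕ) ≠ k), x j) ↔
      Odd k := by
  have : Nonempty (Fin n) := ⟨⟨0, hn⟩⟩
  convert sumExcept_bijective_iff (V := Blk n) (Fin.revPerm : Equiv.Perm (Fin (k + 1))) using 2
  · ext x i : 2
    rw [Fin.filter_add_ne_eq_erase_rev, sumExcept, Fin.revPerm_apply]
  · rw [Fintype.card_fin, Nat.even_add_one, Nat.not_even_iff_odd]

/-- **core linear algebra of Lemma 4.1.** Define
`T : (Fin (k+1) → Blk n) → (Fin (k+1) → Blk n)` by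
`(T x) i = ⊕_{j : i + j ≠ k} x j` (the XOR of all coordinates of `x` except the
anti-diagonal partner of `i`).  Then `T` is bijective if and only if `k` is odd. -/
theorem xor_except_antidiagonal_bijective_iff_odd (n k : ℕ) (hn : 1 ≤ n) (hk : 1 ≤ k) :
    Function.Bijective
      (fun (x : Fin (k + 1) → Blk n) (i : Fin (k + 1)) =>
        ∑ j ∈ Finset.univ.filter (fun j : Fin (k + 1) => (i : ℕ) + (j : ℕ) ≠ k), x j) ↔
      Odd k :=
  xor_except_antidiagonal_bijective_iff_odd_general n k hn
end
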